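/- Let T be a bounded linear operator on an infinite-dimensional complex Banach space. T satisfies property (Z_{Π_a}) if and only if T satisfies Browder's theorem (σ(T)\σ_W(T) = Π^0(T)) and Π_a(T) = Π^0(T). -/

import Mathlib

open Set

noncomputable section

namespace ZProps

variable {X : Type*} [NormedAddCommGroup X] [NormedSpace ℂ X] [CompleteSpace X]

/-- The spectrum of `T`. -/
def sp (T : X →L[ℂ] X) : Set ℂ := spectrum ℂ T

/-- The approximate point spectrum: `λ` such that `T - λ` is not bounded below. -/
def spa (T : X →L[ℂ] X) : Set ℂ :=
  {l | ¬ ∃ c > (0:ℝ), ∀ x : X, c * ‖x‖ ≤ ‖(T - l • 1) x‖}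

/-- The point spectrum (eigenvalues). -/
def spp (T : X →L[ℂ] X) : Set ℂ := {l | ∃ x : X, x ≠ 0 ∧ T x = l • x}

/-- Eigenvalues of finite multiplicity. -/
def spp0 (T : X →L[ℂ] X) : Set ℂ :=
  {l | l ∈ spp T ∧ FiniteDimensional ℂ (LinearMap.ker ((T - l • 1 : X →L[ℂ] X) : X →ₗ[ℂ] X))}

/-- Isolated points of a subset of `ℂ`. -/
def iso (A : Set ℂ) : Set ℂ :=
  {l | l ∈ A ∧ ∃ ε > (0:ℝ), ∀ μ ∈ A, μ ≠ l → ε ≤ ‖μ - l‖}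

def Ea (T : X →L[ℂ] X) : Set ℂ := iso (spa T) ∩ spp T
def Ea0 (T : X →L[ℂ] X) : Set ℂ := iso (spa T) ∩ spp0 T
def Efull (T : X →L[ℂ] X) : Set ℂ := iso (sp T) ∩ spp T
def E0 (T : X →L[ℂ] X) : Set ℂ := iso (sp T) ∩ spp0 T

/-- Fredholm operator: finite-dimensional kernel, closed range of finite codimension. -/
def IsFredholmOp (S : X →L[ℂ] X) : Prop :=
  FiniteDimensional ℂ (LinearMap.ker (S : X →ₗ[ℂ] X)) ∧
  FiniteDimensional ℂ (X ⧸ LinearMap.range (S : X →ₗ[ℂ] X)) ∧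
  IsClosed ((LinearMap.range (S : X →ₗ[ℂ] X) : Submodule ℂ X) : Set X)

/-- Weyl operator: Fredholm of index 0. -/
def IsWeylOp (S : X →L[ℂ] X) : Prop :=
  IsFredholmOp S ∧
  Module.finrank ℂ (LinearMap.ker (S : X →ₗ[ℂ] X)) = Module.finrank ℂ (X ⧸ LinearMap.range (S : X →ₗ[ℂ] X))

/-- Weyl spectrum. -/
def spW (T : X →L[ℂ] X) : Set ℂ := {l | ¬ IsWeylOp (T - l • 1)}

def HasFiniteAscent (S : X →L[ℂ] X) : Prop :=
  ∃ n : ℕ, LinearMap.ker ((S ^ n : X →L[ℂ] X) : X →ₗ[ℂ] X) = LinearMap.ker ((S ^ (n + 1) : X →L[ℂ] X) : X →ₗ[ℂ] X)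

def HasFiniteDescent (S : X →L[ℂ] X) : Prop :=
  ∃ n : ℕ, LinearMap.range ((S ^ n : X →L[ℂ] X) : X →ₗ[ℂ] X) = LinearMap.range ((S ^ (n + 1) : X →L[ℂ] X) : X →ₗ[ℂ] X)

/-- Ascent of an operator (junk value if infinite). -/
def ascent (S : X →L[ℂ] X) : ℕ :=
  sInf {n : ℕ | LinearMap.ker ((S ^ n : X →L[ℂ] X) : X →ₗ[ℂ] X) = LinearMap.ker ((S ^ (n + 1) : X →L[ℂ] X) : X →ₗ[ℂ] X)}

/-- Poles of the resolvent: spectral points where `T - λ` has finite ascent and descent. -/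
def poles (T : X →L[ℂ] X) : Set ℂ :=
  {l | l ∈ sp T ∧ HasFiniteAscent (T - l • 1) ∧ HasFiniteDescent (T - l • 1)}

/-- Poles of finite rank. -/
def poles0 (T : X →L[ℂ] X) : Set ℂ :=
  {l | l ∈ poles T ∧ FiniteDimensional ℂ (LinearMap.ker ((T - l • 1 : X →L[ℂ] X) : X →ₗ[ℂ] X))}

/-- Left poles: `λ ∈ σ_a(T)` with finite ascent `a = a(T-λ)` and `R((T-λ)^(a+1))` closed. -/
def leftPoles (T : X →L[ℂ] X) : Set ℂ :=
  {l | l ∈ spa T ∧ HasFiniteAscent (T - l • 1) ∧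
    IsClosed ((LinearMap.range ((((T - l • 1) ^ (ascent (T - l • 1) + 1) : X →L[ℂ] X)) : X →ₗ[ℂ] X) : Submodule ℂ X) : Set X)}

/-- Left poles of finite rank. -/
def leftPoles0 (T : X →L[ℂ] X) : Set ℂ :=
  {l | l ∈ leftPoles T ∧ FiniteDimensional ℂ (LinearMap.ker ((T - l • 1 : X →L[ℂ] X) : X →ₗ[ℂ] X))}

/-- A linear endomorphism of a normed space is Weyl (Fredholm of index 0). -/
def LMIsWeyl {V : Type*} [NormedAddCommGroup V] [Module ℂ V] (L : V →ₗ[ℂ] V) : Prop :=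
  FiniteDimensional ℂ (LinearMap.ker L) ∧
  FiniteDimensional ℂ (V ⧸ LinearMap.range L) ∧
  IsClosed ((LinearMap.range L : Submodule ℂ V) : Set V) ∧
  Module.finrank ℂ (LinearMap.ker L) = Module.finrank ℂ (V ⧸ LinearMap.range L)

lemma mapsTo_range_pow (S : X →L[ℂ] X) (n : ℕ) :
    ∀ x ∈ LinearMap.range ((S ^ n : X →L[ℂ] X) : X →ₗ[ℂ] X),
      S x ∈ LinearMap.range ((S ^ n : X →L[ℂ] X) : X →ₗ[ℂ] X) := by
  rintro x ⟨y, rfl⟩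
  exact ⟨S y, by
    have h : (S ^ n) * S = S * (S ^ n) := (Commute.refl S).pow_left n
    calc (S ^ n) (S y) = ((S ^ n) * S) y := rfl
    _ = (S * S ^ n) y := by rw [h]
    _ = S ((S ^ n) y) := rfl⟩

/-- B-Weyl operator: for some `n`, `R(S^n)` is closed and the restriction of `S` to
`R(S^n)` is a Weyl operator. -/
def IsBWeylOp (S : X →L[ℂ] X) : Prop :=
  ∃ n : ℕ, IsClosed ((LinearMap.range ((S ^ n : X →L[ℂ] X) : X →ₗ[ℂ] X) : Submodule ℂ X) : Set X) ∧
    LMIsWeyl ((S : X →ₗ[ℂ] X).restrict (mapsTo_range_pow S n))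

/-- B-Weyl spectrum. -/
def spBW (T : X →L[ℂ] X) : Set ℂ := {l | ¬ IsBWeylOp (T - l • 1)}

/-- Single-valued extension property at a point. -/
def HasSVEPAt (T : X →L[ℂ] X) (l : ℂ) : Prop :=
  ∀ U : Set ℂ, IsOpen U → l ∈ U → ∀ f : ℂ → X, AnalyticOnNhd ℂ f U →
    (∀ μ ∈ U, (T - μ • 1) (f μ) = 0) → ∀ μ ∈ U, f μ = 0

/-- Riesz operator: `R - μ` is Fredholm for every nonzero `μ`. -/
def IsRieszOp (R : X →L[ℂ] X) : Prop :=
  ∀ μ : ℂ, μ ≠ 0 → IsFredholmOp (R - μ • 1)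

/-- Property `(Z_{E_a})`. -/
def PropZEa (T : X →L[ℂ] X) : Prop := sp T \ spW T = Ea T

/-- Property `(Z_{Π_a})`. -/
def PropZPa (T : X →L[ℂ] X) : Prop := sp T \ spW T = leftPoles T

/-- Weyl's theorem. -/
def WeylThm (T : X →L[ℂ] X) : Prop := sp T \ spW T = E0 T

/-- Browder's theorem. -/
def BrowderThm (T : X →L[ℂ] X) : Prop := sp T \ spW T = poles0 T

/-- Property `(k)`. -/
def PropK (T : X →L[ℂ] X) : Prop := sp T \ spW T = Efull T

/-- Property `(gaw)`. -/
def PropGaw (T : X →L[ℂ] X) : Prop := sp T \ spBW T = Ea T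

/-- Property `(aw)`. -/
def PropAw (T : X →L[ℂ] X) : Prop := sp T \ spW T = Ea0 T

/-- Property `(Baw)`. -/
def PropBaw (T : X →L[ℂ] X) : Prop := sp T \ spBW T = Ea0 T

/-- Property `(gab)`. -/
def PropGab (T : X →L[ℂ] X) : Prop := sp T \ spBW T = leftPoles T

/-- Property `(ab)`. -/
def PropAb (T : X →L[ℂ] X) : Prop := sp T \ spW T = leftPoles0 T

end ZProps

end

/-!
If `T - λ` is Weyl, additivity of the index gives every power `(T - λ)ⁿ` index zero, so equal
kernels of consecutive powers force equal ranges: finite ascent implies finite descent. Hence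
under `σ(T) \ σ_W(T) = Π_a(T)` every left pole is a pole of finite rank. Conversely a pole `λ` is
an eigenvalue, since an injective operator of finite descent is surjective; and if `q` is the
descent then `X = N((T - λ)^q) + R((T - λ)^m)` for every `m`, so when `N(T - λ)` is
finite-dimensional each power of `T - λ` has finite-dimensional kernel and cokernel, hence closed
range. Thus `Π⁰(T) ⊆ Π_a(T)` always, and once `Π_a(T) = Π⁰(T)` property `(Z_{Π_a})` and
Browder's theorem are the same statement.
-/

universe u

open Module LinearMap Submodule Cardinal

section IndexAdditivity

variable {K : Type*} [DivisionRing K] {U V W : Type u}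
  [AddCommGroup U] [Module K U] [AddCommGroup V] [Module K V] [AddCommGroup W] [Module K W]

theorem Submodule.rank_map_add_rank_inf_ker (f : V →ₗ[K] W) (p : Submodule K V) :
    Module.rank K (p.map f) + Module.rank K ↥(p ⊓ f.ker) = Module.rank K p := by
  rw [← LinearMap.range_domRestrict, ← map_comap_subtype,
    ← (equivMapOfInjective _ p.injective_subtype _).rank_eq, ← ker_domRestrict,
    rank_range_add_rank_ker]

theorem Submodule.rank_quotient_eq_add_of_le {s t : Submodule K V} (h : s ≤ t) :
    Module.rank K (V ⧸ s) = Module.rank K (V ⧸ t) + Module.rank K (t.map s.mkQ) := by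
  rw [← (quotientQuotientEquivQuotient s t h).rank_eq, rank_quotient_add_rank]

theorem LinearMap.rank_ker_comp (f : U →ₗ[K] V) (g : V →ₗ[K] W) :
    Module.rank K (g ∘ₗ f).ker = Module.rank K f.ker + Module.rank K ↥(f.range ⊓ g.ker) := by
  have h := (g ∘ₗ f).ker.rank_map_add_rank_inf_ker f
  rw [inf_eq_right.mpr (ker_le_ker_comp f g), ker_comp, map_comap_eq] at h
  rw [ker_comp, ← h, add_comm]

theorem LinearMap.rank_quotient_range_comp (f : U →ₗ[K] V) (g : V →ₗ[K] W) :
    Module.rank K (W ⧸ (g ∘ₗ f).range) =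
      Module.rank K (W ⧸ g.range) + Module.rank K (V ⧸ (f.range ⊔ g.ker)) := by
  rw [rank_quotient_eq_add_of_le (range_comp_le_range f g), ← LinearMap.range_comp,
    ← (quotKerEquivRange ((g ∘ₗ f).range.mkQ ∘ₗ g)).rank_eq, ker_comp, ker_mkQ,
    LinearMap.range_comp, comap_map_eq]

theorem LinearMap.rank_ker_eq_rank_inf_add_rank_map_mkQ (f : U →ₗ[K] V) (g : V →ₗ[K] W) :
    Module.rank K g.ker =
      Module.rank K ↥(f.range ⊓ g.ker) + Module.rank K ((f.range ⊔ g.ker).map f.range.mkQ) := by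
  have h := g.ker.rank_map_add_rank_inf_ker f.range.mkQ
  rw [ker_mkQ, inf_comm] at h
  rw [Submodule.map_sup, mkQ_map_self, bot_sup_eq, ← h, add_comm]

/-- Additivity of the index, `ind (g ∘ f) = ind f + ind g`, with every term moved to the side where
it is added, so that it holds for arbitrary ranks. -/
theorem LinearMap.rank_ker_comp_add_rank_quotient_range (f : U →ₗ[K] V) (g : V →ₗ[K] W) :
    Module.rank K (g ∘ₗ f).ker + Module.rank K (W ⧸ g.range) + Module.rank K (V ⧸ f.range) =
      Module.rank K f.ker + Module.rank K g.ker + Module.rank K (W ⧸ (g ∘ₗ f).range) := by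
  rw [rank_ker_comp, rank_quotient_range_comp, rank_ker_eq_rank_inf_add_rank_map_mkQ f g,
    rank_quotient_eq_add_of_le (le_sup_left : f.range ≤ f.range ⊔ g.ker)]
  ring

end IndexAdditivity

theorem Submodule.finite_quotient_of_sup_eq_top {R M : Type*} [Ring R] [AddCommGroup M]
    [Module R M] {p q : Submodule R M} [Module.Finite R p] (h : p ⊔ q = ⊤) :
    Module.Finite R (M ⧸ q) := by
  refine Module.Finite.of_surjective (q.mkQ ∘ₗ p.subtype) (range_eq_top.mp ?_)
  rw [LinearMap.range_comp, range_subtype, ← range_mkQ q, ← Submodule.map_top, ← h,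
    Submodule.map_sup, mkQ_map_self, sup_bot_eq]

namespace Module.End

variable {K : Type*} [DivisionRing K] {V : Type u} [AddCommGroup V] [Module K V] (f : End K V)

instance finiteDimensional_ker_pow [FiniteDimensional K f.ker] (n : ℕ) :
    FiniteDimensional K (f ^ n).ker := by
  induction n with
  | zero => rw [pow_zero, one_eq_id, ker_id]; infer_instance
  | succ n ih =>
    refine rank_lt_aleph0_iff.mp ?_
    rw [iterate_succ, rank_ker_comp]
    exact add_lt_aleph0 (rank_lt_aleph0 K _)
      ((rank_mono inf_le_right).trans_lt (rank_lt_aleph0 K _))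

theorem rank_ker_pow_eq_rank_quotient_range_pow [FiniteDimensional K f.ker]
    (hf : Module.rank K f.ker = Module.rank K (V ⧸ f.range)) (n : ℕ) :
    Module.rank K (f ^ n).ker = Module.rank K (V ⧸ (f ^ n).range) := by
  induction n with
  | zero =>
    rw [pow_zero, one_eq_id, ker_id, LinearMap.range_id, rank_bot,
      rank_zero_iff.mpr (Submodule.Quotient.subsingleton_iff.mpr rfl)]
  | succ n ih =>
    have h := rank_ker_comp_add_rank_quotient_range f (f ^ n)
    rw [← iterate_succ, ← hf, ← ih, add_assoc, add_comm (Module.rank K f.ker),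
      add_comm _ (Module.rank K (V ⧸ (f ^ (n + 1)).range))] at h
    exact (add_right_inj_of_lt_aleph0
      (add_lt_aleph0 (rank_lt_aleph0 K _) (rank_lt_aleph0 K _))).mp h

theorem range_pow_eq_range_pow_succ_of_ker_pow_eq [FiniteDimensional K f.ker]
    (hf : Module.rank K f.ker = Module.rank K (V ⧸ f.range)) {n : ℕ}
    (hn : (f ^ n).ker = (f ^ (n + 1)).ker) : (f ^ n).range = (f ^ (n + 1)).range := by
  have hle : (f ^ (n + 1)).range ≤ (f ^ n).range := by
    rw [iterate_succ]; exact range_comp_le_range f (f ^ n)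
  have h := rank_quotient_eq_add_of_le hle
  rw [← rank_ker_pow_eq_rank_quotient_range_pow f hf,
    ← rank_ker_pow_eq_rank_quotient_range_pow f hf, ← hn] at h
  refine le_antisymm ?_ hle
  rw [← ker_mkQ ((f ^ (n + 1)).range), le_ker_iff_map, ← Submodule.rank_eq_zero]
  exact Cardinal.eq_of_add_eq_add_left (h.symm.trans (add_zero _).symm) (rank_lt_aleph0 K _)

variable {q : ℕ}

theorem range_pow_add_eq_of_range_pow_eq (hq : (f ^ q).range = (f ^ (q + 1)).range) (m : ℕ) :
    (f ^ (q + m)).range = (f ^ q).range := by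
  induction m with
  | zero => rfl
  | succ m ih =>
    rw [← add_assoc, iterate_succ', LinearMap.range_comp, ih, ← LinearMap.range_comp,
      ← iterate_succ', hq]

theorem ker_pow_sup_range_pow_eq_top (hq : (f ^ q).range = (f ^ (q + 1)).range) (m : ℕ) :
    (f ^ q).ker ⊔ (f ^ m).range = ⊤ := by
  refine eq_top_iff.mpr fun x _ => ?_
  obtain ⟨y, hy⟩ : (f ^ q) x ∈ (f ^ (q + m)).range := by
    rw [range_pow_add_eq_of_range_pow_eq f hq]; exact mem_range_self _ x
  have hx : x - (f ^ m) y ∈ (f ^ q).ker := by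
    rw [mem_ker, map_sub, sub_eq_zero, ← mul_apply, ← pow_add, hy]
  simpa using add_mem_sup hx (mem_range_self (f ^ m) y)

theorem range_eq_top_of_ker_eq_bot (hinj : f.ker = ⊥)
    (hq : (f ^ q).range = (f ^ (q + 1)).range) : f.range = ⊤ := by
  have hpow : (f ^ q).ker = ⊥ := ker_eq_bot.mpr (iterate_injective (ker_eq_bot.mp hinj) q)
  simpa [hpow] using ker_pow_sup_range_pow_eq_top f hq 1

end Module.End

/-- Restricting `A` to a closed complement of its finite-dimensional kernel reduces this to the
injective case, `closed_complemented_range_of_isCompl_of_ker_eq_bot`. -/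
theorem ContinuousLinearMap.isClosed_range_of_finiteDimensional_ker_quotient
    {𝕜 E F : Type*} [RCLike 𝕜] [NormedAddCommGroup E] [NormedSpace 𝕜 E] [CompleteSpace E]
    [NormedAddCommGroup F] [NormedSpace 𝕜 F] [CompleteSpace F] (A : E →L[𝕜] F)
    [FiniteDimensional 𝕜 (A : E →ₗ[𝕜] F).ker]
    [FiniteDimensional 𝕜 (F ⧸ (A : E →ₗ[𝕜] F).range)] :
    IsClosed ((A : E →ₗ[𝕜] F).range : Set F) := by
  obtain ⟨W, hW, hWker⟩ :=
    (ClosedComplemented.of_finiteDimensional (A : E →ₗ[𝕜] F).ker).exists_isClosed_isCompl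
  obtain ⟨G, hG⟩ := (A : E →ₗ[𝕜] F).range.exists_isCompl
  have : CompleteSpace W := hW.completeSpace_coe
  have : FiniteDimensional 𝕜 G := (quotientEquivOfIsCompl _ G hG).finiteDimensional
  have hrange : ((A ∘L W.subtypeL : W →L[𝕜] F) : W →ₗ[𝕜] F).range = (A : E →ₗ[𝕜] F).range := by
    rw [toLinearMap_comp, LinearMap.range_comp, toLinearMap_subtypeL, range_subtype,
      ← Submodule.map_top, ← hWker.sup_eq_top, Submodule.map_sup, le_ker_iff_map.mp le_rfl,
      bot_sup_eq]
  have hker : ((A ∘L W.subtypeL : W →L[𝕜] F) : W →ₗ[𝕜] F).ker = ⊥ := by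
    rw [toLinearMap_comp, toLinearMap_subtypeL, ker_comp, ← disjoint_iff_comap_eq_bot]
    exact hWker.disjoint.symm
  rw [← hrange]
  exact (A ∘L W.subtypeL).closed_complemented_range_of_isCompl_of_ker_eq_bot G (hrange ▸ hG)
    G.closed_of_finiteDimensional hker

namespace ZProps

variable {X : Type*} [NormedAddCommGroup X] [NormedSpace ℂ X]

theorem mem_spa_of_mem_ker {T : X →L[ℂ] X} {l : ℂ} {x : X} (hx : x ≠ 0)
    (hTx : (T - l • 1) x = 0) : l ∈ spa T := by
  rintro ⟨c, hc, hbound⟩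
  have h := hbound x
  rw [hTx, norm_zero] at h
  exact (mul_pos hc (norm_pos_iff.mpr hx)).not_ge h

theorem ker_ne_bot_of_mem_poles [CompleteSpace X] {T : X →L[ℂ] X} {l : ℂ} (hl : l ∈ poles T) :
    ((T - l • 1 : X →L[ℂ] X) : X →ₗ[ℂ] X).ker ≠ ⊥ := by
  obtain ⟨hsp, -, q, hq⟩ := hl
  intro hbot
  simp only [ContinuousLinearMap.toLinearMap_pow] at hq
  have hunit : IsUnit (T - l • 1) := ContinuousLinearMap.isUnit_iff_bijective.mpr
    ⟨ker_eq_bot.mp hbot, range_eq_top.mp (Module.End.range_eq_top_of_ker_eq_bot _ hbot hq)⟩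
  refine spectrum.mem_iff.mp hsp ?_
  rw [Algebra.algebraMap_eq_smul_one, ← neg_sub]
  exact hunit.neg

theorem poles0_subset_leftPoles [CompleteSpace X] (T : X →L[ℂ] X) : poles0 T ⊆ leftPoles T := by
  rintro l ⟨hl, hfin⟩
  obtain ⟨x, hxker, hx0⟩ := exists_mem_ne_zero_of_ne_bot (ker_ne_bot_of_mem_poles hl)
  obtain ⟨-, hA, q, hq⟩ := hl
  refine ⟨mem_spa_of_mem_ker hx0 hxker, hA, ?_⟩
  set m := ascent (T - l • 1) + 1
  simp only [ContinuousLinearMap.toLinearMap_pow] at hq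
  have : FiniteDimensional ℂ ((((T - l • 1) ^ m : X →L[ℂ] X) : X →ₗ[ℂ] X).ker) := by
    rw [ContinuousLinearMap.toLinearMap_pow]; infer_instance
  have : FiniteDimensional ℂ (X ⧸ (((T - l • 1) ^ m : X →L[ℂ] X) : X →ₗ[ℂ] X).range) := by
    rw [ContinuousLinearMap.toLinearMap_pow]
    exact finite_quotient_of_sup_eq_top (Module.End.ker_pow_sup_range_pow_eq_top _ hq m)
  exact ((T - l • 1) ^ m).isClosed_range_of_finiteDimensional_ker_quotient

theorem IsWeylOp.hasFiniteDescent {S : X →L[ℂ] X} (hW : IsWeylOp S) (hA : HasFiniteAscent S) :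
    HasFiniteDescent S := by
  obtain ⟨⟨hker, hcoker, -⟩, hidx⟩ := hW
  obtain ⟨n, hn⟩ := hA
  refine ⟨n, ?_⟩
  simp only [ContinuousLinearMap.toLinearMap_pow] at hn ⊢
  refine Module.End.range_pow_eq_range_pow_succ_of_ker_pow_eq _ ?_ hn
  rw [← finrank_eq_rank, ← finrank_eq_rank, hidx]

end ZProps

open ZProps in
theorem stmt11_general {X : Type*} [NormedAddCommGroup X] [NormedSpace ℂ X] [CompleteSpace X]
    (T : X →L[ℂ] X) :
    PropZPa T ↔ BrowderThm T ∧ leftPoles T = poles0 T := by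
  unfold PropZPa BrowderThm
  refine ⟨fun hZ => ?_, fun ⟨hB, hpoles⟩ => hB.trans hpoles.symm⟩
  have hpoles : leftPoles T = poles0 T := by
    refine Subset.antisymm (fun l hl => ?_) (poles0_subset_leftPoles T)
    obtain ⟨hsp, hnW⟩ : l ∈ sp T \ spW T := hZ ▸ hl
    have hW : IsWeylOp (T - l • 1) := not_not.mp hnW
    exact ⟨⟨hsp, hl.2.1, hW.hasFiniteDescent hl.2.1⟩, hW.1.1⟩
  exact ⟨hZ.trans hpoles, hpoles⟩

open ZProps in
theorem stmt11 {X : Type*} [NormedAddCommGroup X] [NormedSpace ℂ X] [CompleteSpace X]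
    (hinf : ¬ FiniteDimensional ℂ X) (T : X →L[ℂ] X) :
    PropZPa T ↔ BrowderThm T ∧ leftPoles T = poles0 T :=
  stmt11_general T
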